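/- Let r ≥ 1, n ≥ 1 and s = (s_1, …, s_n) ∈ ℝ_{>0}^n with s_i ≤ s_{i+1} for 1 ≤ i ≤ n−1. Then s'_i := ε̂^{r,i−1}_{(s_1,…,s_{i−1})}(s_i) > 0 for 1 ≤ i ≤ n, and for every x ∈ ℝ_{≥0} one has ε̂^{r,n}_s(x) = (ε̂^{r+n−1,1}_{s'_n} ∘ ⋯ ∘ ε̂^{r+1,1}_{s'_2} ∘ ε̂^{r,1}_{s'_1})(x). -/

import Mathlib

noncomputable section

open scoped BigOperators

open Classical in
/-- The absolute value `|y| = q^{deg y}` (and `|0| = 0`) on `A = F_q[T]`. -/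
def absA (Fq : Type) [Field Fq] [Fintype Fq] (y : Polynomial Fq) : ℝ :=
  if y = 0 then 0 else (Fintype.card Fq : ℝ) ^ y.natDegree

/-- `ε^{r,n}_s(x) = x + Σ_{y ∈ A^n, y ≠ 0} max(x − max_{1≤i≤n} |y_i|^r·s_i, 0)`.
(For each `x` only finitely many summands are nonzero, so the `tsum` agrees with the
intended sum; the inner `⨆` over the finite type `Fin n` is the maximum.) -/
def epsFun (Fq : Type) [Field Fq] [Fintype Fq] (r n : ℕ) (s : Fin n → ℝ) (x : ℝ) : ℝ :=
  x + ∑' y : {y : Fin n → Polynomial Fq // y ≠ 0},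
      max (x - ⨆ i : Fin n, (absA Fq (y.1 i)) ^ r * s i) 0

/-- `δ^{r,n}(s) = ((q−1)/(q^{r+n}−1))·Σ_{i=1}^n q^{n−i}·ε^{r,i−1}_{(s_1,…,s_{i−1})}(s_i)`. -/
def deltaFun (Fq : Type) [Field Fq] [Fintype Fq] (r n : ℕ) (s : Fin n → ℝ) : ℝ :=
  ((Fintype.card Fq : ℝ) - 1) / ((Fintype.card Fq : ℝ) ^ (r + n) - 1) *
    ∑ i : Fin n, (Fintype.card Fq : ℝ) ^ (n - 1 - (i : ℕ)) *
      epsFun Fq r i (fun j : Fin (i : ℕ) => s (Fin.castLE i.isLt.le j)) (s i)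

/-- `ε̂^{r,n}_s(x) = ε^{r,n}_s(x) − δ^{r,n}(s)`. -/
def epsHat (Fq : Type) [Field Fq] [Fintype Fq] (r n : ℕ) (s : Fin n → ℝ) (x : ℝ) : ℝ :=
  epsFun Fq r n s x - deltaFun Fq r n s

/-- `s'_{k+1} = ε̂^{r,k}_{(s_1,…,s_k)}(s_{k+1})` (0-indexed: the sequence of values appearing
in Statement 10), extended by `0` outside the range. -/
def primeSeq (Fq : Type) [Field Fq] [Fintype Fq] (r n : ℕ) (s : Fin n → ℝ) (k : ℕ) : ℝ :=
  if h : k < n then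
    epsHat Fq r k (fun j : Fin k => s ⟨j.1, j.2.trans h⟩) (s ⟨k, h⟩)
  else 0

/-- The iterated composite `ε̂^{r+k−1,1}_{s'(k-1)} ∘ ⋯ ∘ ε̂^{r,1}_{s'(0)}`. -/
def iterChain (Fq : Type) [Field Fq] [Fintype Fq] (r : ℕ) (s' : ℕ → ℝ) : ℕ → ℝ → ℝ
  | 0, x => x
  | (k + 1), x => epsHat Fq (r + k) 1 (fun _ => s' k) (iterChain Fq r s' k x)

/-! Split off the last coordinate `z = y_n` of `y ∈ A^n` and write `s̃ = (s_1, …, s_{n-1})`.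
The identity `max (x - max M a) 0 = max (x - M) 0 - max (min x a - M) 0` gives
`ε_s(x) = ε_{s̃}(x) + Σ_{z ≠ 0} (ε_{s̃}(x) - ε_{s̃}(min x (|z|^r s_n)))`.
If `ε̂_{s̃}` is homogeneous, `ε̂_{s̃}(q^r u) = q^{r+n-1} ε̂_{s̃}(u)` for `u ≥ s_n`, then
`ε̂_{s̃}(|z|^r s_n) = |z|^{r+n-1} s'_n`, so by monotonicity the sum is the one defining
`ε^{r+n-1,1}_{s'_n}` at `ε̂_{s̃}(x)`; the constants match because
`δ^{r,n}(s) = δ^{r,n-1}(s̃) + δ^{r+n-1,1}(s'_n)`. Hence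
`ε̂^{r,n}_s = ε̂^{r+n-1,1}_{s'_n} ∘ ε̂^{r,n-1}_{s̃}`, and homogeneity propagates along this
recursion from the one-variable case, which follows from `|wT + a| = q |w|` for `w ≠ 0`. -/

section

open Polynomial

theorem tsum_subtype_ne_eq_sub {α β : Type*} [AddCommGroup α] [TopologicalSpace α]
    [IsTopologicalAddGroup α] [T2Space α] {f : β → α} (hf : Summable f) (b : β) :
    ∑' y : {y // y ≠ b}, f y = ∑' y, f y - f b := by
  classical
  rw [hf.tsum_eq_add_tsum_ite b, add_sub_cancel_left]
  exact (tsum_subtype {b}ᶜ f).trans (tsum_congr fun y => by by_cases h : y = b <;> simp [h])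

theorem Monotone.sub_apply_min {α : Type*} [LinearOrder α] {f : α → ℝ} (hf : Monotone f)
    (x a : α) :
    f x - f (min x a) = max (f x - f a) 0 := by
  rcases le_total x a with h | h
  · rw [min_eq_left h, sub_self, max_eq_right (sub_nonpos.2 (hf h))]
  · rw [min_eq_right h, max_eq_left (sub_nonneg.2 (hf h))]

theorem apply_pow_mul_eq_of_apply_mul_eq {f : ℝ → ℝ} {a b σ : ℝ} (ha : 1 ≤ a)
    (hσ : 0 ≤ σ) (hf : ∀ u ≥ σ, f (a * u) = b * f u) (d : ℕ) :
    f (a ^ d * σ) = b ^ d * f σ := by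
  induction d with
  | zero => simp
  | succ d ih =>
    rw [pow_succ', mul_assoc, hf _ (le_mul_of_one_le_left hσ (one_le_pow₀ ha)), ih, pow_succ',
      mul_assoc]

theorem max_sub_max_eq_sub_max_min (x M a : ℝ) :
    max (x - max M a) 0 = max (x - M) 0 - max (min x a - M) 0 := by
  simp only [max_def, min_def]
  split_ifs <;> linarith

theorem Polynomial.divX_mul_X_add_C {R : Type*} [Semiring R] (w : R[X]) (a : R) :
    divX (w * X + C a) = w := by
  ext n
  simp [coeff_divX]

@[simps]
def Polynomial.mulXAddCEquiv (R : Type*) [Semiring R] : R × R[X] ≃ R[X] where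
  toFun p := p.2 * X + C p.1
  invFun z := (z.coeff 0, divX z)
  left_inv p := by simp [divX_mul_X_add_C]
  right_inv := divX_mul_X_add

variable {Fq : Type} [Field Fq] [Fintype Fq]

local notation "q" => (Fintype.card Fq : ℝ)

theorem one_lt_card_real : 1 < q := by exact_mod_cast Fintype.one_lt_card

theorem absA_zero : absA Fq 0 = 0 := by simp [absA]

theorem absA_of_ne_zero {y : Fq[X]} (h : y ≠ 0) : absA Fq y = q ^ y.natDegree := by
  simp [absA, h]

theorem absA_nonneg (y : Fq[X]) : 0 ≤ absA Fq y := by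
  unfold absA; split_ifs <;> positivity

theorem absA_le_pow_absA (y : Fq[X]) {k : ℕ} (hk : k ≠ 0) : absA Fq y ≤ absA Fq y ^ k := by
  by_cases h : y = 0
  · simp [h, absA_zero, zero_pow hk]
  · exact le_self_pow₀ (absA_of_ne_zero h ▸ one_le_pow₀ one_lt_card_real.le) hk

theorem absA_C {a : Fq} (ha : a ≠ 0) : absA Fq (C a) = 1 := by
  rw [absA_of_ne_zero (C_ne_zero.2 ha), natDegree_C, pow_zero]

theorem absA_mul_X_add_C {w : Fq[X]} (hw : w ≠ 0) (a : Fq) :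
    absA Fq (w * X + C a) = q * absA Fq w := by
  have hne : w * X + C a ≠ 0 := fun h => hw (by rw [← divX_mul_X_add_C w a, h, divX_zero])
  rw [absA_of_ne_zero hne, absA_of_ne_zero hw, natDegree_add_C, natDegree_mul_X hw, pow_succ']

theorem finite_setOf_absA_lt (c : ℝ) : {z : Fq[X] | absA Fq z < c}.Finite := by
  obtain ⟨N, hN⟩ := pow_unbounded_of_one_lt c (one_lt_card_real (Fq := Fq))
  have : Finite (degreeLT Fq N) := .of_equiv _ (degreeLTEquiv Fq N).toEquiv.symm
  refine (degreeLT Fq N : Set Fq[X]).toFinite.subset fun z hz => mem_degreeLT.2 ?_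
  by_cases h : z = 0
  · simp [h]
  · rw [Set.mem_ofPred_eq, absA_of_ne_zero h] at hz
    exact (degree_le_natDegree).trans_lt (by exact_mod_cast
      (pow_lt_pow_iff_right₀ one_lt_card_real).1 (hz.trans hN))

theorem finite_setOf_absA_pow_mul_lt {k : ℕ} (hk : k ≠ 0) {σ : ℝ} (hσ : 0 < σ) (x : ℝ) :
    {z : Fq[X] | absA Fq z ^ k * σ < x}.Finite :=
  (finite_setOf_absA_lt (x / σ)).subset fun z hz => by
    rw [Set.mem_ofPred_eq, lt_div_iff₀ hσ]
    exact (mul_le_mul_of_nonneg_right (absA_le_pow_absA z hk) hσ.le).trans_lt hz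

theorem one_le_card_pow (k : ℕ) : 1 ≤ q ^ k := one_le_pow₀ one_lt_card_real.le

def weightedSup (r n : ℕ) (s : Fin n → ℝ) (y : Fin n → Fq[X]) : ℝ :=
  ⨆ i, absA Fq (y i) ^ r * s i

theorem epsFun_def (r n : ℕ) (s : Fin n → ℝ) (x : ℝ) :
    epsFun Fq r n s x = x + ∑' y : {y : Fin n → Fq[X] // y ≠ 0},
      max (x - weightedSup r n s y.1) 0 := rfl

theorem weightedSup_nonneg {r n : ℕ} {s : Fin n → ℝ} (hs : ∀ i, 0 ≤ s i)
    (y : Fin n → Fq[X]) :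
    0 ≤ weightedSup r n s y :=
  Real.iSup_nonneg fun i => mul_nonneg (pow_nonneg (absA_nonneg _) _) (hs i)

theorem weightedSup_zero {r n : ℕ} (hr : r ≠ 0) (s : Fin n → ℝ) :
    weightedSup r n s (0 : Fin n → Fq[X]) = 0 := by
  simp [weightedSup, absA_zero, zero_pow hr]

theorem le_weightedSup {r n : ℕ} (s : Fin n → ℝ) (y : Fin n → Fq[X]) (i : Fin n) :
    absA Fq (y i) ^ r * s i ≤ weightedSup r n s y :=
  le_ciSup (f := fun i => absA Fq (y i) ^ r * s i) (Finite.bddAbove_range _) i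

theorem summable_max_sub_weightedSup {r n : ℕ} (hr : r ≠ 0) {s : Fin n → ℝ}
    (hs : ∀ i, 0 < s i) (x : ℝ) :
    Summable fun y : Fin n → Fq[X] => max (x - weightedSup r n s y) 0 := by
  refine summable_of_hasFiniteSupport ((Set.Finite.pi'
    fun i => finite_setOf_absA_pow_mul_lt hr (hs i) x).subset fun y hy i => ?_)
  have : weightedSup r n s y < x := by
    by_contra! h
    exact hy (max_eq_right (sub_nonpos.2 h))
  exact (le_weightedSup s y i).trans_lt this

theorem epsFun_eq_tsum {r n : ℕ} (hr : r ≠ 0) {s : Fin n → ℝ} (hs : ∀ i, 0 < s i)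
    {x : ℝ} (hx : 0 ≤ x) :
    epsFun Fq r n s x = ∑' y : Fin n → Fq[X], max (x - weightedSup r n s y) 0 := by
  classical
  rw [epsFun_def, tsum_subtype_ne_eq_sub (summable_max_sub_weightedSup hr hs x),
    weightedSup_zero hr, sub_zero, max_eq_left hx, add_sub_cancel]

theorem epsFun_apply_zero {r n : ℕ} (hr : r ≠ 0) {s : Fin n → ℝ} (hs : ∀ i, 0 < s i) :
    epsFun Fq r n s 0 = 0 := by
  rw [epsFun_eq_tsum hr hs le_rfl]
  refine (tsum_congr fun y => max_eq_right ?_).trans tsum_zero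
  linarith [weightedSup_nonneg (r := r) (fun i => (hs i).le) y]

theorem epsFun_mono {r n : ℕ} (hr : r ≠ 0) {s : Fin n → ℝ} (hs : ∀ i, 0 < s i) :
    Monotone (epsFun Fq r n s) := fun a b hab =>
  add_le_add hab <| Summable.tsum_le_tsum (fun _ => max_le_max (by linarith) le_rfl)
    ((summable_max_sub_weightedSup hr hs a).subtype _)
    ((summable_max_sub_weightedSup hr hs b).subtype _)

theorem epsHat_mono {r n : ℕ} (hr : r ≠ 0) {s : Fin n → ℝ} (hs : ∀ i, 0 < s i) :
    Monotone (epsHat Fq r n s) := fun _ _ hab =>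
  sub_le_sub_right (epsFun_mono hr hs hab) _

theorem epsHat_dim_zero (r : ℕ) (s : Fin 0 → ℝ) (x : ℝ) : epsHat Fq r 0 s x = x := by
  simp [epsHat, epsFun, deltaFun]

theorem deltaFun_dim_one (k : ℕ) (t : Fin 1 → ℝ) :
    deltaFun Fq k 1 t = (q - 1) / (q ^ (k + 1) - 1) * t 0 := by
  simp [deltaFun, epsFun]

theorem epsFun_dim_one (k : ℕ) (t x : ℝ) :
    epsFun Fq k 1 (fun _ => t) x =
      x + ∑' z : {z : Fq[X] // z ≠ 0}, max (x - absA Fq z ^ k * t) 0 := by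
  let e : {z : Fq[X] // z ≠ 0} ≃ {y : Fin 1 → Fq[X] // y ≠ 0} :=
    (Equiv.funUnique (Fin 1) Fq[X]).symm.subtypeEquiv fun z => by
      simp [funext_iff]
  rw [epsFun_def, ← e.tsum_eq]
  congr 1
  refine tsum_congr fun z => ?_
  simp [e, weightedSup]

theorem epsFun_dim_one_eq_tsum {k : ℕ} (hk : k ≠ 0) {t x : ℝ} (ht : 0 < t) (hx : 0 ≤ x) :
    epsFun Fq k 1 (fun _ => t) x = ∑' z : Fq[X], max (x - absA Fq z ^ k * t) 0 := by
  rw [epsFun_eq_tsum hk (fun _ => ht) hx, ← (Equiv.funUnique (Fin 1) Fq[X]).symm.tsum_eq]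
  refine tsum_congr fun z => ?_
  simp [weightedSup]

theorem summable_max_sub_absA_pow_mul {k : ℕ} (hk : k ≠ 0) {t : ℝ} (ht : 0 < t) (x : ℝ) :
    Summable fun z : Fq[X] => max (x - absA Fq z ^ k * t) 0 :=
  summable_of_hasFiniteSupport <| (finite_setOf_absA_pow_mul_lt hk ht x).subset fun z hz => by
    by_contra h
    exact hz (max_eq_right (sub_nonpos.2 (not_lt.1 h)))

open Classical in
theorem max_sub_absA_mul_X_add_C {k : ℕ} (hk : k ≠ 0) {t u : ℝ} (ht : 0 < t) (htu : t ≤ u)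
    (a : Fq) (w : Fq[X]) :
    max (q ^ k * u - absA Fq (w * X + C a) ^ k * t) 0 =
      q ^ k * max (u - absA Fq w ^ k * t) 0 - if w = 0 then (if a = 0 then 0 else t) else 0 := by
  have hq : 0 ≤ q ^ k := zero_le_one.trans (one_le_card_pow k)
  have hu : u ≤ q ^ k * u := le_mul_of_one_le_left (ht.le.trans htu) (one_le_card_pow k)
  have hu0 : 0 ≤ u := ht.le.trans htu
  by_cases hw : w = 0
  · by_cases ha : a = 0
    · simp [hw, ha, absA_zero, zero_pow hk, hu0, hu0.trans hu]
    · simp only [hw, ha, zero_mul, zero_add, absA_C ha, absA_zero, zero_pow hk, one_pow, one_mul,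
        sub_zero, if_true, if_false, max_eq_left hu0]
      exact max_eq_left (by linarith)
  · rw [absA_mul_X_add_C hw, if_neg hw, sub_zero, mul_pow, mul_assoc, ← mul_sub,
      mul_max_of_nonneg _ _ hq, mul_zero]

theorem tsum_max_sub_absA_pow_mul_card_pow {k : ℕ} (hk : k ≠ 0) {t u : ℝ} (ht : 0 < t)
    (htu : t ≤ u) :
    ∑' z : Fq[X], max (q ^ k * u - absA Fq z ^ k * t) 0 =
      q ^ (k + 1) * ∑' z : Fq[X], max (u - absA Fq z ^ k * t) 0 - (q - 1) * t := by
  classical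
  have hsum : Summable fun p : Fq × Fq[X] =>
      max (q ^ k * u - absA Fq (p.2 * X + C p.1) ^ k * t) 0 :=
    (mulXAddCEquiv Fq).summable_iff.2 (summable_max_sub_absA_pow_mul hk ht _)
  have hfiber (a : Fq) : ∑' w : Fq[X], max (q ^ k * u - absA Fq (w * X + C a) ^ k * t) 0 =
      q ^ k * ∑' z : Fq[X], max (u - absA Fq z ^ k * t) 0 - if a = 0 then 0 else t := by
    rw [tsum_congr (max_sub_absA_mul_X_add_C hk ht htu a), Summable.tsum_sub
      ((summable_max_sub_absA_pow_mul hk ht u).mul_left _) (summable_of_hasFiniteSupport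
        ((Set.finite_singleton 0).subset fun w hw => by by_contra h; exact hw (if_neg h))),
      tsum_mul_left, tsum_ite_eq]
  rw [← (mulXAddCEquiv Fq).tsum_eq]
  simp only [mulXAddCEquiv_apply]
  rw [hsum.tsum_prod' hsum.prod_factor, tsum_fintype,
    Finset.sum_congr rfl fun a _ => hfiber a, Finset.sum_sub_distrib]
  simp only [Finset.sum_const, Finset.card_univ, nsmul_eq_mul, Finset.sum_ite,
    Finset.filter_ne', Finset.card_erase_of_mem (Finset.mem_univ _)]
  rw [Nat.cast_sub Fintype.card_pos]
  ring

theorem card_pow_succ_sub_one_pos (k : ℕ) : 0 < q ^ (k + 1) - 1 :=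
  sub_pos.2 (one_lt_pow₀ one_lt_card_real k.succ_ne_zero)

theorem epsHat_dim_one_card_pow_mul {k : ℕ} (hk : k ≠ 0) {t u : ℝ} (ht : 0 < t)
    (htu : t ≤ u) :
    epsHat Fq k 1 (fun _ => t) (q ^ k * u) = q ^ (k + 1) * epsHat Fq k 1 (fun _ => t) u := by
  have hu : 0 ≤ u := ht.le.trans htu
  have hne := (card_pow_succ_sub_one_pos (Fq := Fq) k).ne'
  rw [epsHat, epsHat, epsFun_dim_one_eq_tsum hk ht (mul_nonneg (by positivity) hu),
    epsFun_dim_one_eq_tsum hk ht hu, tsum_max_sub_absA_pow_mul_card_pow hk ht htu, deltaFun_dim_one]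
  generalize ∑' z : Fq[X], max (u - absA Fq z ^ k * t) 0 = F
  field_simp
  ring

theorem epsHat_dim_one_pos {k : ℕ} (hk : k ≠ 0) {t v : ℝ} (ht : 0 < t) (htv : t ≤ v) :
    0 < epsHat Fq k 1 (fun _ => t) v := by
  have hδ : (q - 1) / (q ^ (k + 1) - 1) * t < t := by
    have hpos := card_pow_succ_sub_one_pos (Fq := Fq) k
    rw [div_mul_eq_mul_div, div_lt_iff₀ hpos]
    have : q < q ^ (k + 1) := by
      simpa using pow_lt_pow_right₀ one_lt_card_real (Nat.succ_lt_succ (Nat.pos_of_ne_zero hk))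
    nlinarith
  have hε : v ≤ epsFun Fq k 1 (fun _ => t) v := by
    rw [epsFun_dim_one]
    exact le_add_of_nonneg_right (tsum_nonneg fun _ => le_max_right _ _)
  rw [epsHat, deltaFun_dim_one]
  linarith

theorem weightedSup_snoc {r m : ℕ} {s : Fin (m + 1) → ℝ} (hs : ∀ i, 0 ≤ s i)
    (w : Fin m → Fq[X]) (z : Fq[X]) :
    weightedSup r (m + 1) s (Fin.snoc w z) =
      max (weightedSup r m (Fin.init s) w) (absA Fq z ^ r * s (Fin.last m)) := by
  apply le_antisymm
  · refine Real.iSup_le (fun i => ?_)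
      (le_max_of_le_right (mul_nonneg (pow_nonneg (absA_nonneg z) r) (hs _)))
    induction i using Fin.lastCases with
    | last => rw [Fin.snoc_last]; exact le_max_right _ _
    | cast j => rw [Fin.snoc_castSucc]; exact le_max_of_le_left (le_weightedSup (Fin.init s) w j)
  · refine max_le (Real.iSup_le (fun j => ?_) (weightedSup_nonneg hs _)) ?_
    · have := le_weightedSup (r := r) s (Fin.snoc w z) j.castSucc
      rwa [Fin.snoc_castSucc] at this
    · simpa only [Fin.snoc_last] using le_weightedSup s (Fin.snoc w z) (Fin.last m)

theorem epsFun_dim_succ {r m : ℕ} (hr : r ≠ 0) {s : Fin (m + 1) → ℝ} (hs : ∀ i, 0 < s i)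
    {x : ℝ} (hx : 0 ≤ x) :
    epsFun Fq r (m + 1) s x = epsFun Fq r m (Fin.init s) x +
      ∑' z : {z : Fq[X] // z ≠ 0}, (epsFun Fq r m (Fin.init s) x -
        epsFun Fq r m (Fin.init s) (min x (absA Fq z ^ r * s (Fin.last m)))) := by
  classical
  have hinit : ∀ i, 0 < Fin.init s i := fun i => hs _
  have hfiber (z : Fq[X]) :
      ∑' w, max (x - weightedSup r (m + 1) s (Fin.snoc w z)) 0 =
        epsFun Fq r m (Fin.init s) x -
          epsFun Fq r m (Fin.init s) (min x (absA Fq z ^ r * s (Fin.last m))) := by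
    have ha : 0 ≤ absA Fq z ^ r * s (Fin.last m) :=
      mul_nonneg (pow_nonneg (absA_nonneg z) r) (hs _).le
    simp_rw [weightedSup_snoc (fun i => (hs i).le), max_sub_max_eq_sub_max_min]
    rw [Summable.tsum_sub (summable_max_sub_weightedSup hr hinit _)
      (summable_max_sub_weightedSup hr hinit _), ← epsFun_eq_tsum hr hinit hx,
      ← epsFun_eq_tsum hr hinit (le_min hx ha)]
  have hsum : Summable fun p : Fq[X] × (Fin m → Fq[X]) =>
      max (x - weightedSup r (m + 1) s (Fin.snoc p.2 p.1)) 0 :=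
    (Fin.snocEquiv _).summable_iff.2 (summable_max_sub_weightedSup hr hs x)
  have hf0 : epsFun Fq r m (Fin.init s) x -
      epsFun Fq r m (Fin.init s) (min x (absA Fq 0 ^ r * s (Fin.last m))) =
        epsFun Fq r m (Fin.init s) x := by
    rw [absA_zero, zero_pow hr, zero_mul, min_eq_right hx, epsFun_apply_zero hr hinit, sub_zero]
  rw [epsFun_eq_tsum hr hs hx, ← (Fin.snocEquiv _).tsum_eq]
  change ∑' p : Fq[X] × (Fin m → Fq[X]),
    max (x - weightedSup r (m + 1) s (Fin.snoc p.2 p.1)) 0 = _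
  rw [hsum.tsum_prod' hsum.prod_factor, tsum_congr hfiber,
    tsum_subtype_ne_eq_sub (hsum.prod.congr hfiber) 0, hf0, add_sub_cancel]

theorem deltaFun_dim_succ {r : ℕ} (hr : r ≠ 0) (m : ℕ) (s : Fin (m + 1) → ℝ) :
    deltaFun Fq r (m + 1) s = deltaFun Fq r m (Fin.init s) +
      deltaFun Fq (r + m) 1 (fun _ => epsHat Fq r m (Fin.init s) (s (Fin.last m))) := by
  have hsum : ∑ i : Fin (m + 1), q ^ (m + 1 - 1 - (i : ℕ)) *
        epsFun Fq r i (fun j : Fin i => s (Fin.castLE i.isLt.le j)) (s i) =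
      q * ∑ i : Fin m, q ^ (m - 1 - (i : ℕ)) *
        epsFun Fq r i (fun j : Fin i => Fin.init s (Fin.castLE i.isLt.le j)) (Fin.init s i) +
      epsFun Fq r m (Fin.init s) (s (Fin.last m)) := by
    rw [Fin.sum_univ_castSucc, Finset.mul_sum]
    congr 1
    · refine Finset.sum_congr rfl fun i _ => ?_
      rw [← mul_assoc, ← pow_succ']
      congr 2
      simp only [Fin.val_castSucc]
      omega
    · simp
      rfl
  have h1 := (card_pow_succ_sub_one_pos (Fq := Fq) (r + m)).ne'
  have h2 : q ^ (r + m) - 1 ≠ 0 := (sub_pos.2 (one_lt_pow₀ one_lt_card_real (by omega))).ne'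
  rw [deltaFun_dim_one, epsHat, deltaFun, deltaFun, hsum]
  generalize ∑ i : Fin m, q ^ (m - 1 - (i : ℕ)) *
        epsFun Fq r i (fun j : Fin i => Fin.init s (Fin.castLE i.isLt.le j)) (Fin.init s i) = S
  generalize epsFun Fq r m (Fin.init s) (s (Fin.last m)) = P
  rw [← Nat.add_assoc, pow_succ'] at *
  generalize q ^ (r + m) = Q at h1 h2 ⊢
  field_simp
  ring

theorem epsHat_dim_succ {r m : ℕ} (hr : r ≠ 0) {s : Fin (m + 1) → ℝ} (hs : ∀ i, 0 < s i)
    (hscale : ∀ u ≥ s (Fin.last m),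
      epsHat Fq r m (Fin.init s) (q ^ r * u) = q ^ (r + m) * epsHat Fq r m (Fin.init s) u)
    {x : ℝ} (hx : 0 ≤ x) :
    epsHat Fq r (m + 1) s x = epsHat Fq (r + m) 1
      (fun _ => epsHat Fq r m (Fin.init s) (s (Fin.last m))) (epsHat Fq r m (Fin.init s) x) := by
  set f := epsHat Fq r m (Fin.init s)
  set σ := s (Fin.last m)
  have hpow (z : Fq[X]) (hz : z ≠ 0) : f (absA Fq z ^ r * σ) = absA Fq z ^ (r + m) * f σ := by
    rw [absA_of_ne_zero hz, ← pow_mul, ← pow_mul, mul_comm _ r, mul_comm _ (r + m), pow_mul,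
      pow_mul]
    exact apply_pow_mul_eq_of_apply_mul_eq (one_le_card_pow r) (hs _).le hscale _
  have hterm (z : {z : Fq[X] // z ≠ 0}) :
      epsFun Fq r m (Fin.init s) x - epsFun Fq r m (Fin.init s) (min x (absA Fq z ^ r * σ)) =
        max (f x - absA Fq z ^ (r + m) * f σ) 0 := by
    have hmono : Monotone f := epsHat_mono hr fun i => hs _
    rw [← hpow z z.2, ← hmono.sub_apply_min]
    exact (sub_sub_sub_cancel_right _ _ _).symm
  rw [epsHat, epsFun_dim_succ hr hs hx, tsum_congr hterm, deltaFun_dim_succ hr,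
    epsHat.eq_1 Fq (r + m), epsFun_dim_one]
  simp only [f, epsHat]
  ring

-- Positivity is needed for the homogeneity step one dimension up, and vice versa.
theorem epsHat_pos_and_card_pow_mul {r : ℕ} (hr : r ≠ 0) {n : ℕ} {s : Fin n → ℝ}
    (hs : ∀ i, 0 < s i) (hmono : Monotone s) {u : ℝ} (hu : 0 < u) (hsu : ∀ i, s i ≤ u) :
    0 < epsHat Fq r n s u ∧ epsHat Fq r n s (q ^ r * u) = q ^ (r + n) * epsHat Fq r n s u := by
  induction n generalizing u with
  | zero => simp [epsHat_dim_zero, hu]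
  | succ m ih =>
    have hinit : ∀ i, 0 < Fin.init s i := fun i => hs _
    have hσ : ∀ i, Fin.init s i ≤ s (Fin.last m) := fun i => hmono (Fin.castSucc_lt_last i).le
    have ih' := @ih (Fin.init s) hinit fun _ _ hab => hmono hab
    have hscale (v : ℝ) (hv : v ≥ s (Fin.last m)) :=
      (ih' ((hs _).trans_le hv) fun i => (hσ i).trans hv).2
    have ht := (ih' (hs _) hσ).1
    have htu := epsHat_mono (Fq := Fq) hr hinit (hsu (Fin.last m))
    rw [epsHat_dim_succ hr hs hscale hu.le, epsHat_dim_succ hr hs hscale (by positivity),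
      hscale u (hsu _), epsHat_dim_one_card_pow_mul (by omega) ht htu, Nat.add_assoc]
    exact ⟨epsHat_dim_one_pos (by omega) ht htu, rfl⟩

theorem epsHat_dim_succ_of_monotone {r m : ℕ} (hr : r ≠ 0) {s : Fin (m + 1) → ℝ}
    (hs : ∀ i, 0 < s i) (hmono : Monotone s) {x : ℝ} (hx : 0 ≤ x) :
    epsHat Fq r (m + 1) s x = epsHat Fq (r + m) 1
      (fun _ => epsHat Fq r m (Fin.init s) (s (Fin.last m))) (epsHat Fq r m (Fin.init s) x) :=
  epsHat_dim_succ hr hs (fun _ hv => (epsHat_pos_and_card_pow_mul (s := Fin.init s) hr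
    (fun _ => hs _) (fun _ _ hab => hmono hab) ((hs _).trans_le hv)
    fun i => (hmono (Fin.castSucc_lt_last i).le).trans hv).2) hx

theorem primeSeq_pos {r n : ℕ} (hr : r ≠ 0) {s : Fin n → ℝ} (hs : ∀ i, 0 < s i)
    (hmono : Monotone s) {k : ℕ} (hk : k < n) : 0 < primeSeq Fq r n s k := by
  rw [primeSeq, dif_pos hk]
  exact (epsHat_pos_and_card_pow_mul (Fq := Fq) (n := k) hr (fun _ => hs _)
    (fun _ _ hab => hmono hab) (hs _) fun j => hmono (Fin.mk_le_mk.2 j.2.le)).1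

theorem iterChain_congr {r k : ℕ} {s₁ s₂ : ℕ → ℝ} (h : ∀ j < k, s₁ j = s₂ j) :
    iterChain Fq r s₁ k = iterChain Fq r s₂ k := by
  induction k with
  | zero => rfl
  | succ k ih =>
    funext x
    simp only [iterChain, h k k.lt_succ_self, ih fun j hj => h j (hj.trans k.lt_succ_self)]

theorem primeSeq_init {r m : ℕ} (s : Fin (m + 1) → ℝ) {j : ℕ} (hj : j < m) :
    primeSeq Fq r m (Fin.init s) j = primeSeq Fq r (m + 1) s j := by
  rw [primeSeq, primeSeq, dif_pos hj, dif_pos (hj.trans m.lt_succ_self)]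
  rfl

theorem primeSeq_last {r m : ℕ} (s : Fin (m + 1) → ℝ) :
    primeSeq Fq r (m + 1) s m = epsHat Fq r m (Fin.init s) (s (Fin.last m)) := by
  rw [primeSeq, dif_pos m.lt_succ_self]
  rfl

theorem epsHat_eq_iterChain {r : ℕ} (hr : r ≠ 0) {n : ℕ} {s : Fin n → ℝ}
    (hs : ∀ i, 0 < s i) (hmono : Monotone s) {x : ℝ} (hx : 0 ≤ x) :
    epsHat Fq r n s x = iterChain Fq r (primeSeq Fq r n s) n x := by
  induction n with
  | zero => exact epsHat_dim_zero r s x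
  | succ m ih =>
    rw [epsHat_dim_succ_of_monotone hr hs hmono hx,
      ih (s := Fin.init s) (fun _ => hs _) fun _ _ hab => hmono hab, ← primeSeq_last,
      iterChain_congr fun j hj => primeSeq_init s hj]
    rfl

end

theorem statement10_general (Fq : Type) [Field Fq] [Fintype Fq]
    (r n : ℕ) (hr : 1 ≤ r) (s : Fin n → ℝ) (hs : ∀ i, 0 < s i)
    (hmono : Monotone s) :
    (∀ k : ℕ, k < n → 0 < primeSeq Fq r n s k) ∧
    ∀ x : ℝ, 0 ≤ x →
      epsHat Fq r n s x = iterChain Fq r (primeSeq Fq r n s) n x :=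
  ⟨fun _ hk => primeSeq_pos (by omega) hs hmono hk,
    fun _ hx => epsHat_eq_iterChain (by omega) hs hmono hx⟩

/-- Let `r ≥ 1`, `n ≥ 1` and `s ∈ ℝ_{>0}^n` be nondecreasing.  Then
`s'_i := ε̂^{r,i−1}_{(s_1,…,s_{i−1})}(s_i) > 0` for `1 ≤ i ≤ n`, and for every `x ≥ 0` one
has `ε̂^{r,n}_s(x) = (ε̂^{r+n−1,1}_{s'_n} ∘ ⋯ ∘ ε̂^{r+1,1}_{s'_2} ∘ ε̂^{r,1}_{s'_1})(x)`. -/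
theorem statement10 (Fq : Type) [Field Fq] [Fintype Fq]
    (r n : ℕ) (hr : 1 ≤ r) (hn : 1 ≤ n) (s : Fin n → ℝ) (hs : ∀ i, 0 < s i)
    (hmono : Monotone s) :
    (∀ k : ℕ, k < n → 0 < primeSeq Fq r n s k) ∧
    ∀ x : ℝ, 0 ≤ x →
      epsHat Fq r n s x = iterChain Fq r (primeSeq Fq r n s) n x :=
  statement10_general Fq r n hr s hs hmono
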